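/- arXiv:1006.1413 — 3 statements merged into one kernel-verified Lean document; each statement's English description precedes it below -/
import Mathlib

section
/- For every type τ, if ⟦τ⟧ ≠ ∅ (i.e., there exists a value v with v ∈ τ), then ↑τ holds. -/
/-! ## Possibly infinite types and values, coinductively defined as M-types -/

/-- Shapes of type constructors: `int`, object types (class name plus finite
set of field names), and binary union. -/
inductive TyShape : Type where
  | int : TyShape
  | obj : String → Finset String → TyShape
  | union : TyShape

/-- Children (immediate subterms) of each shape. -/
def TyChild : TyShape → Type
  | .int => Empty
  | .obj _ fs => {f : String // f ∈ fs}
  | .union => Bool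

/-- The polynomial functor whose final coalgebra is the set of types. -/
def TyP : PFunctor := ⟨TyShape, TyChild⟩

/-- Possibly infinite types, coinductively generated by
`τ ::= int | obj C [f₁:τ₁,…,fₙ:τₙ] | τ₁ ∨ τ₂`. -/
def Ty : Type := TyP.M

/-- The type `int`. -/
def Ty.int : Ty := PFunctor.M.mk ⟨TyShape.int, Empty.elim⟩

/-- The union type `τ₁ ∨ τ₂`. -/
def Ty.union (t1 t2 : Ty) : Ty :=
  PFunctor.M.mk ⟨TyShape.union, fun b => cond b t1 t2⟩

/-- The object type `obj C [f:τ_f  |  f ∈ fs]`. -/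
def Ty.obj (c : String) (fs : Finset String) (ch : {f : String // f ∈ fs} → Ty) : Ty :=
  PFunctor.M.mk ⟨TyShape.obj c fs, ch⟩

/-- Object type with no fields. -/
def Ty.obj0 (c : String) : Ty :=
  Ty.obj c ∅ (fun f => absurd f.2 (Finset.notMem_empty f.1))

/-- Object type with a single field. -/
def Ty.obj1 (c f : String) (t : Ty) : Ty :=
  Ty.obj c {f} (fun _ => t)

/-- Object type with two (distinct) fields. -/
def Ty.obj2 (c f1 f2 : String) (t1 t2 : Ty) : Ty :=
  Ty.obj c {f1, f2} (fun g => if g.1 = f1 then t1 else t2)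

/-- Shapes of values: integers and objects. -/
inductive ValShape : Type where
  | int : ℤ → ValShape
  | obj : String → Finset String → ValShape

/-- Children of each value shape. -/
def ValChild : ValShape → Type
  | .int _ => Empty
  | .obj _ fs => {f : String // f ∈ fs}

/-- The polynomial functor whose final coalgebra is the set of values. -/
def ValP : PFunctor := ⟨ValShape, ValChild⟩

/-- Possibly infinite values, coinductively generated by
`v ::= i | obj C [f₁↦v₁,…,fₙ↦vₙ]`. -/
def Val : Type := ValP.M

/-- The integer value `i`. -/
def Val.int (i : ℤ) : Val := PFunctor.M.mk ⟨ValShape.int i, Empty.elim⟩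

/-- The object value `obj C [f ↦ v_f | f ∈ fs]`. -/
def Val.obj (c : String) (fs : Finset String) (ch : {f : String // f ∈ fs} → Val) : Val :=
  PFunctor.M.mk ⟨ValShape.obj c fs, ch⟩

/-- Object value with a single field. -/
def Val.obj1 (c f : String) (v : Val) : Val :=
  Val.obj c {f} (fun _ => v)

/-! ## Subtyping

A contractive derivation is a possibly infinite derivation with no
sub-derivation built only with rules (∨R1) and (∨R2); equivalently, the
premises of (∨R1) and (∨R2) are interpreted inductively (within a layer),
while the premises of all other rules are interpreted coinductively (they
refer to the greatest fixed point `Subty`). -/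

/-- One inductive layer of the subtyping rules: premises of (∨R1)/(∨R2) are
inductive occurrences (so only finitely many consecutive applications of
these rules are possible, i.e. derivations are contractive), premises of all
other rules are occurrences of the coinductively-interpreted relation `R`. -/
inductive SubStep (R : Ty → Ty → Prop) : Ty → Ty → Prop where
  | int : SubStep R Ty.int Ty.int
  | unionR1 {t t1 t2 : Ty} : SubStep R t t1 → SubStep R t (Ty.union t1 t2)
  | unionR2 {t t1 t2 : Ty} : SubStep R t t2 → SubStep R t (Ty.union t1 t2)
  | unionL {t1 t2 t : Ty} : R t1 t → R t2 t → SubStep R (Ty.union t1 t2) t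
  | obj {c : String} {fs fs' : Finset String} (hsub : fs' ⊆ fs)
      {ch : {f : String // f ∈ fs} → Ty} {ch' : {f : String // f ∈ fs'} → Ty} :
      (∀ (f : String) (h : f ∈ fs'), R (ch ⟨f, hsub h⟩) (ch' ⟨f, h⟩)) →
      SubStep R (Ty.obj c fs ch) (Ty.obj c fs' ch')
  | distr {c : String} {fs : Finset String} {ch : {f : String // f ∈ fs} → Ty}
      {f : String} (hf : f ∈ fs) {s1 s2 t : Ty} :
      ch ⟨f, hf⟩ = Ty.union s1 s2 →
      R (Ty.obj c fs (fun g => if g.1 = f then s1 else ch g)) t →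
      R (Ty.obj c fs (fun g => if g.1 = f then s2 else ch g)) t →
      SubStep R (Ty.obj c fs ch) t

/-- The subtyping relation `τ ≤ τ′`: greatest fixed point of `SubStep`,
i.e. existence of a contractive, possibly infinite derivation. -/
def Subty (t1 t2 : Ty) : Prop :=
  ∃ R : Ty → Ty → Prop, (∀ x y, R x y → SubStep R x y) ∧ R t1 t2

/-! ## Membership of values in types -/

/-- One inductive layer of the membership rules: premises of (∨L)/(∨R) are
inductive (contractiveness), premises of (obj) are coinductive. -/
inductive MemStep (R : Val → Ty → Prop) : Val → Ty → Prop where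
  | int (i : ℤ) : MemStep R (Val.int i) Ty.int
  | unionL {v : Val} {t1 t2 : Ty} : MemStep R v t1 → MemStep R v (Ty.union t1 t2)
  | unionR {v : Val} {t1 t2 : Ty} : MemStep R v t2 → MemStep R v (Ty.union t1 t2)
  | obj {c : String} {gs fs : Finset String} (hsub : fs ⊆ gs)
      {vch : {f : String // f ∈ gs} → Val} {ch : {f : String // f ∈ fs} → Ty} :
      (∀ (f : String) (h : f ∈ fs), R (vch ⟨f, hsub h⟩) (ch ⟨f, h⟩)) →
      MemStep R (Val.obj c gs vch) (Ty.obj c fs ch)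

/-- The membership relation `v ∈ τ`: greatest fixed point of `MemStep`,
i.e. existence of a contractive, possibly infinite derivation. -/
def MemVal (v : Val) (t : Ty) : Prop :=
  ∃ R : Val → Ty → Prop, (∀ w s, R w s → MemStep R w s) ∧ R v t

/-! ## The non-emptiness predicate `↑τ` -/

/-- One inductive layer of the non-emptiness rules: premises of (↑∨L)/(↑∨R)
are inductive (contractiveness), premises of (↑obj) are coinductive. -/
inductive NEStep (R : Ty → Prop) : Ty → Prop where
  | int : NEStep R Ty.int
  | unionL {t1 t2 : Ty} : NEStep R t1 → NEStep R (Ty.union t1 t2)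
  | unionR {t1 t2 : Ty} : NEStep R t2 → NEStep R (Ty.union t1 t2)
  | obj {c : String} {fs : Finset String} {ch : {f : String // f ∈ fs} → Ty} :
      (∀ (f : String) (h : f ∈ fs), R (ch ⟨f, h⟩)) →
      NEStep R (Ty.obj c fs ch)

/-- The non-emptiness predicate `↑τ`: greatest fixed point of `NEStep`. -/
def NotEmpty (t : Ty) : Prop :=
  ∃ R : Ty → Prop, (∀ s, R s → NEStep R s) ∧ R t

/-! Erasing the values from a membership derivation of `v ∈ τ` leaves a non-emptiness derivation
of `↑τ`: the rules correspond one to one, so contractiveness is preserved. Formally, the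
inhabited types form a post-fixed point of `NEStep`. -/

theorem MemStep.mono {R R' : Val → Ty → Prop} (hRR' : ∀ v t, R v t → R' v t) {v : Val} {t : Ty}
    (h : MemStep R v t) : MemStep R' v t := by
  induction h with
  | int i => exact .int i
  | unionL _ ih => exact .unionL ih
  | unionR _ ih => exact .unionR ih
  | obj hsub hch => exact .obj hsub fun f hf => hRR' _ _ (hch f hf)

theorem MemVal.memStep {v : Val} {t : Ty} (h : MemVal v t) : MemStep MemVal v t := by
  obtain ⟨R, hR, hvt⟩ := h
  exact (hR v t hvt).mono fun w s hws => ⟨R, hR, hws⟩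

theorem MemStep.nEStep {R : Val → Ty → Prop} {v : Val} {t : Ty} (h : MemStep R v t) :
    NEStep (fun s => ∃ w, R w s) t := by
  induction h with
  | int => exact .int
  | unionL _ ih => exact .unionL ih
  | unionR _ ih => exact .unionR ih
  | obj _ hch => exact .obj fun f hf => ⟨_, hch f hf⟩

/-- Completeness of `↑τ`: if `⟦τ⟧ ≠ ∅` then `↑τ` holds. -/
theorem notEmpty_complete (t : Ty) (h : ∃ v : Val, MemVal v t) : NotEmpty t := by
  refine ⟨fun s => ∃ v, MemVal v s, ?_, h⟩
  rintro s ⟨v, hv⟩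
  exact hv.memStep.nEStep
end

section
/- Let ⊥ be the regular type satisfying ⊥ = ⊥ ∨ ⊥, and let τ = obj C1 [f: obj C2 [g:⊥]] for class names C1, C2 and field names f, g. Then τ ≤ ⊥ is NOT derivable from the six subtyping rules (without the rule (empty)): every possible derivation of τ ≤ ⊥ is built by applying only rules (∨R1) and (∨R2), and is therefore not contractive. -/
/- `⊥` has no constructor other than `∨`, so the only rules with `⊥` on the right are
(∨R1), (∨R2) (which reproduce the goal `τ ≤ ⊥`), (∨L) (needs a union on the left) and
(distr) (needs a union-typed field on the left). The field of `τ` is an object type, so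
no rule other than (∨R1)/(∨R2) ever applies, and a contractive derivation cannot exist. -/

namespace Ty

theorem union_inj {a₁ a₂ b₁ b₂ : Ty} (h : union a₁ a₂ = union b₁ b₂) : a₁ = b₁ ∧ a₂ = b₂ := by
  have hch : (fun b => cond b a₁ a₂ : Bool → Ty) = fun b => cond b b₁ b₂ := by
    injection PFunctor.M.mk_inj h
  exact ⟨congrFun hch true, congrFun hch false⟩

theorem obj_ne_union {c : String} {fs : Finset String} {ch : {f : String // f ∈ fs} → Ty}
    {t₁ t₂ : Ty} : obj c fs ch ≠ union t₁ t₂ := fun h => by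
  injection PFunctor.M.mk_inj h with hshape
  cases hshape

theorem int_ne_obj {c : String} {fs : Finset String} {ch : {f : String // f ∈ fs} → Ty} :
    int ≠ obj c fs ch := fun h => by
  injection PFunctor.M.mk_inj h with hshape
  cases hshape

theorem obj_inj {c c' : String} {fs fs' : Finset String} {ch : {f : String // f ∈ fs} → Ty}
    {ch' : {f : String // f ∈ fs'} → Ty} (h : obj c fs ch = obj c' fs' ch') :
    c = c' ∧ fs = fs' ∧ HEq ch ch' := by
  injection PFunctor.M.mk_inj h with hshape hch
  injection hshape with hc hfs
  exact ⟨hc, hfs, hch⟩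

end Ty

theorem SubStep.exists_union_field_of_obj {R : Ty → Ty → Prop} {bot : Ty}
    (hbot : bot = Ty.union bot bot) {c : String} {fs : Finset String}
    {ch : {f : String // f ∈ fs} → Ty} (h : SubStep R (Ty.obj c fs ch) bot) :
    ∃ x s₁ s₂, ch x = Ty.union s₁ s₂ := by
  suffices ∀ t s, SubStep R t s → t = Ty.obj c fs ch → s = bot → ∃ x s₁ s₂, ch x = Ty.union s₁ s₂
    from this _ _ h rfl rfl
  intro t s hts
  induction hts with
  | int => exact fun ht _ => absurd ht Ty.int_ne_obj
  | unionR1 _ ih => exact fun ht hs => ih ht (Ty.union_inj (hs.trans hbot)).1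
  | unionR2 _ ih => exact fun ht hs => ih ht (Ty.union_inj (hs.trans hbot)).2
  | unionL => exact fun ht _ => absurd ht.symm Ty.obj_ne_union
  | obj => exact fun _ hs => absurd (hs.trans hbot) Ty.obj_ne_union
  | distr _ hunion =>
    intro ht _
    obtain ⟨rfl, rfl, hch⟩ := Ty.obj_inj ht
    cases hch
    exact ⟨_, _, _, hunion⟩

/-- If `⊥` is the regular type with `⊥ = ⊥ ∨ ⊥`, then
`obj C1 [f: obj C2 [g:⊥]] ≤ ⊥` is not derivable from the six subtyping rules
(without rule (empty)). -/
theorem nested_bot_not_subty_bot (bot : Ty) (hbot : bot = Ty.union bot bot)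
    (c1 c2 f g : String) :
    ¬ Subty (Ty.obj1 c1 f (Ty.obj1 c2 g bot)) bot := by
  rintro ⟨R, hR, hrel⟩
  obtain ⟨_, _, _, hunion⟩ := (hR _ _ hrel).exists_union_field_of_obj hbot
  exact Ty.obj_ne_union hunion
end

section
/- For every type σ, let τ be the regular type satisfying the equation τ = σ ∨ τ. Then both τ ≤ σ and σ ≤ τ hold, i.e., τ and σ are equivalent with respect to subtyping. -/
/-
For `t = σ ∨ t`, rule (∨L) splits `t ≤ σ` into `σ ≤ σ` and the same goal `t ≤ σ` again, so the
derivation loops through (∨L), never through (∨R1)/(∨R2) alone, and is therefore contractive. Conversely `σ ≤ σ ∨ t` is a single (∨R1) step on top of reflexivity.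
-/

theorem SubStep.mono {R S : Ty → Ty → Prop} (h : ∀ x y, R x y → S x y) {x y : Ty}
    (hxy : SubStep R x y) : SubStep S x y := by
  induction hxy with
  | int => exact .int
  | unionR1 _ ih => exact .unionR1 ih
  | unionR2 _ ih => exact .unionR2 ih
  | unionL h1 h2 => exact .unionL (h _ _ h1) (h _ _ h2)
  | obj hsub hch => exact .obj hsub fun f hf => h _ _ (hch f hf)
  | distr hf he h1 h2 => exact .distr hf he (h _ _ h1) (h _ _ h2)

theorem Ty.mk_union (f : TyP.B TyShape.union → TyP.M) :
    PFunctor.M.mk (F := TyP) ⟨TyShape.union, f⟩ = Ty.union (f true) (f false) := by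
  unfold Ty.union
  congr 2
  funext b
  cases b <;> rfl

theorem SubStep.self {R : Ty → Ty → Prop} (hrefl : ∀ x, R x x)
    (hleft : ∀ x y, R x (Ty.union x y)) (hright : ∀ x y, R y (Ty.union x y)) (x : Ty) :
    SubStep R x x := by
  refine PFunctor.M.casesOn' (r := fun x => SubStep R x x) x fun a ch => ?_
  cases a with
  | int =>
    obtain rfl : ch = Empty.elim := funext fun e => e.elim
    exact .int
  | obj c fs => exact .obj subset_rfl fun f _ => hrefl _
  | union =>
    rw [Ty.mk_union]
    exact .unionL (hleft _ _) (hright _ _)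

theorem Subty.unfold {x y : Ty} (h : Subty x y) : SubStep Subty x y := by
  obtain ⟨R, hR, hxy⟩ := h
  exact (hR x y hxy).mono fun a b hab => ⟨R, hR, hab⟩

theorem Subty.coinduct (R : Ty → Ty → Prop)
    (hR : ∀ x y, R x y → SubStep (fun a b => R a b ∨ Subty a b) x y) {x y : Ty} (hxy : R x y) :
    Subty x y := by
  refine ⟨fun a b => R a b ∨ Subty a b, ?_, .inl hxy⟩
  rintro a b (hab | hab)
  · exact hR a b hab
  · exact hab.unfold.mono fun _ _ => .inr

/-- Equality alone is not closed under the rules, since (∨L) reduces `x ∨ y ≤ x ∨ y` to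
`x ≤ x ∨ y` and `y ≤ x ∨ y`; adding these pairs gives a closed relation. -/
theorem subty_of_eq_or_union_component {x y : Ty}
    (h : x = y ∨ (∃ z, y = Ty.union x z) ∨ ∃ z, y = Ty.union z x) : Subty x y := by
  let R : Ty → Ty → Prop := fun x y => x = y ∨ (∃ z, y = Ty.union x z) ∨ ∃ z, y = Ty.union z x
  have hself : ∀ x, SubStep R x x := SubStep.self (fun _ => .inl rfl)
    (fun _ y => .inr (.inl ⟨y, rfl⟩)) (fun x _ => .inr (.inr ⟨x, rfl⟩))
  refine ⟨R, ?_, h⟩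
  rintro x y (rfl | ⟨z, rfl⟩ | ⟨z, rfl⟩)
  · exact hself x
  · exact .unionR1 (hself x)
  · exact .unionR2 (hself x)

theorem Subty.refl (x : Ty) : Subty x x :=
  subty_of_eq_or_union_component (.inl rfl)

theorem Subty.le_union_left (x y : Ty) : Subty x (Ty.union x y) :=
  subty_of_eq_or_union_component (.inr (.inl ⟨y, rfl⟩))

theorem Subty.of_eq_union_self {s t u : Ty} (ht : t = Ty.union s t) (hs : Subty s u) :
    Subty t u := by
  refine Subty.coinduct (fun a b => a = t ∧ b = u) ?_ ⟨rfl, rfl⟩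
  rintro a b ⟨ha, hb⟩
  rw [ha, hb]
  have hstep : SubStep (fun a b => (a = t ∧ b = u) ∨ Subty a b) (Ty.union s t) u :=
    .unionL (.inr hs) (.inl ⟨rfl, rfl⟩)
  rwa [← ht] at hstep

/-- For every type `σ`, if `τ` is the regular type with `τ = σ ∨ τ`, then
`τ ≤ σ` and `σ ≤ τ`, i.e. `τ` and `σ` are equivalent w.r.t. subtyping. -/
theorem union_self_absorb (σ t : Ty) (ht : t = Ty.union σ t) :
    Subty t σ ∧ Subty σ t := by
  refine ⟨Subty.of_eq_union_self ht (Subty.refl σ), ?_⟩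
  rw [ht]
  exact Subty.le_union_left σ t
end
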